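/- arXiv:2108.09972 — 3 statements merged into one kernel-verified Lean document; each statement's English description precedes it below -/
import Mathlib

section
/- The explicit profile W̄(y)=(1+|y̌|²)^{1/2} W*((1+|y̌|²)^{−3/2} y₁) solves the self-similar 3D Burgers equation: if W*:ℝ→ℝ is a differentiable solution of the 1D self-similar Burgers equation −(1/2)W*(y)+((3/2)y+W*(y))(W*)'(y)=0, then W̄ defined above satisfies −(1/2)W̄ + ((3/2)y₁+W̄)∂₁W̄ + (1/2)y_μ∂_μW̄ = 0 on ℝ³ (sum over μ=2,3). Moreover this W̄ is generic: its third-derivative Hessian at the origin satisfies ∇²∂₁W̄(0)=diag(6,2,2), which is positive definite. -/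
/-!
The explicit profile `W̄(y) = (1+|y̌|²)^{1/2} W*((1+|y̌|²)^{-3/2} y₁)` solves the
self-similar 3D Burgers equation, where `W*` is the stable self-similar 1D
Burgers profile (the smooth odd solution of `x = -W* - (W*)³`, which satisfies
`W*(0)=0`, `(W*)'(0)=-1` and the 1D self-similar Burgers ODE).  Moreover `W̄` is
generic: `∇²∂₁W̄(0) = diag(6,2,2)`, which is positive definite.
-/

/-- Partial derivative in the coordinate direction `i`. -/
noncomputable def pd (i : Fin 3) (f : (Fin 3 → ℝ) → ℝ) : (Fin 3 → ℝ) → ℝ :=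
  fun y => fderiv ℝ f y (Pi.single i 1)

lemma line_hasDerivAt (y : Fin 3 → ℝ) (i : Fin 3) :
    HasDerivAt (fun t : ℝ => Function.update y i t) (Pi.single i 1) (y i) := by
  have h : (fun t : ℝ => Function.update y i t)
      = fun t => y + (t - y i) • (Pi.single i 1 : Fin 3 → ℝ) := by
    funext t
    funext j
    by_cases h : j = i
    · subst h; simp
    · simp [Function.update_of_ne h, Pi.single_eq_of_ne h]
  rw [h]
  have h1 : HasDerivAt (fun t : ℝ => t - y i) 1 (y i) := (hasDerivAt_id _).sub_const _
  have h2 := h1.smul_const (Pi.single i 1 : Fin 3 → ℝ)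
  simpa using h2.const_add y

lemma pd_eq (f : (Fin 3 → ℝ) → ℝ) (y : Fin 3 → ℝ) (i : Fin 3)
    (hf : DifferentiableAt ℝ f y) :
    pd i f y = deriv (fun t => f (Function.update y i t)) (y i) := by
  have hff : HasFDerivAt f (fderiv ℝ f y) (Function.update y i (y i)) := by
    rw [Function.update_eq_self]; exact hf.hasFDerivAt
  have h1 := hff.comp_hasDerivAt (y i) (line_hasDerivAt y i)
  have h2 : deriv (fun t => f (Function.update y i t)) (y i)
      = fderiv ℝ f y (Pi.single i 1) := h1.deriv
  rw [pd, h2]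

-- one-variable derivative along the "transverse" axes
lemma oneVar (G : ℝ → ℝ) (hG : Differentiable ℝ G) (a c : ℝ) (k : ℤ) (t : ℝ) :
    HasDerivAt
      (fun s : ℝ => Real.sqrt (1 + s^2 + c^2) ^ k * G (a / Real.sqrt (1 + s^2 + c^2) ^ 3))
      ((k : ℝ) * t * Real.sqrt (1 + t^2 + c^2) ^ (k - 2) * G (a / Real.sqrt (1 + t^2 + c^2) ^ 3)
        - 3 * t * a * Real.sqrt (1 + t^2 + c^2) ^ (k - 5)
          * deriv G (a / Real.sqrt (1 + t^2 + c^2) ^ 3)) t := by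
  have hupos : ∀ s : ℝ, (0:ℝ) < 1 + s^2 + c^2 := by intro s; positivity
  set r := Real.sqrt (1 + t^2 + c^2) with hrdef
  have hrpos : 0 < r := Real.sqrt_pos.mpr (hupos t)
  have hr0 : r ≠ 0 := ne_of_gt hrpos
  have hu : HasDerivAt (fun s : ℝ => 1 + s^2 + c^2) (2*t) t := by
    have := ((hasDerivAt_pow 2 t).const_add 1).add_const (c^2)
    simpa using this
  have hr : HasDerivAt (fun s : ℝ => Real.sqrt (1 + s^2 + c^2)) (2*t / (2*r)) t :=
    hu.sqrt (ne_of_gt (hupos t))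
  -- r^k part
  have hrk : HasDerivAt (fun s : ℝ => Real.sqrt (1 + s^2 + c^2) ^ k)
      ((k : ℝ) * r ^ (k-1) * (2*t / (2*r))) t :=
    by have := (hasDerivAt_zpow k r (Or.inl hr0)).comp t hr; exact this
  -- xi part
  have hr3 : HasDerivAt (fun s : ℝ => Real.sqrt (1 + s^2 + c^2) ^ 3)
      (((3:ℕ) : ℝ) * r ^ (3-1 : ℕ) * (2*t / (2*r))) t :=
    by have := (hasDerivAt_pow 3 r).comp t hr; exact this
  have hxi : HasDerivAt (fun s : ℝ => a / Real.sqrt (1 + s^2 + c^2) ^ 3)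
      ((0 * r^3 - a * (((3:ℕ):ℝ) * r ^ (3-1 : ℕ) * (2*t/(2*r)))) / (r^3)^2) t :=
    (hasDerivAt_const t a).div hr3 (pow_ne_zero 3 hr0)
  have hGxi : HasDerivAt (fun s : ℝ => G (a / Real.sqrt (1 + s^2 + c^2) ^ 3))
      (deriv G (a / r^3) * ((0 * r^3 - a * (((3:ℕ):ℝ) * r ^ (3-1 : ℕ) * (2*t/(2*r)))) / (r^3)^2)) t :=
    ((hG _).hasDerivAt).comp t hxi
  have := hrk.mul hGxi
  refine this.congr_deriv ?_
  have e1 : r ^ (k-1) = r ^ k / r := by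
    rw [zpow_sub₀ hr0, zpow_one]
  have e2 : r ^ (k-2) = r ^ k / r^2 := by
    rw [zpow_sub₀ hr0]; norm_cast
  have e5 : r ^ (k-5) = r ^ k / r^5 := by
    rw [zpow_sub₀ hr0]; norm_cast
  rw [e1, e2, e5]
  field_simp
  ring

lemma axis0 (G : ℝ → ℝ) (hG : Differentiable ℝ G) (C R : ℝ) (hR : R ≠ 0) (t : ℝ) :
    HasDerivAt (fun s : ℝ => C * G (s / R)) (C / R * deriv G (t / R)) t := by
  have h1 : HasDerivAt (fun s : ℝ => s / R) (1 / R) t := by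
    simpa using (hasDerivAt_id t).div_const R
  have h2 := ((hG (t / R)).hasDerivAt.comp t h1).const_mul C
  exact h2.congr_deriv (by ring)

lemma diffPi (G : ℝ → ℝ) (hG : Differentiable ℝ G) (k : ℤ) :
    Differentiable ℝ (fun y : Fin 3 → ℝ =>
      Real.sqrt (1 + (y 1)^2 + (y 2)^2) ^ k
        * G (y 0 / Real.sqrt (1 + (y 1)^2 + (y 2)^2) ^ 3)) := by
  have hc : ∀ i : Fin 3, Differentiable ℝ (fun y : Fin 3 → ℝ => y i) :=
    fun i => differentiable_pi.mp differentiable_id i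
  have hA : Differentiable ℝ (fun y : Fin 3 → ℝ => 1 + (y 1)^2 + (y 2)^2) :=
    (differentiable_const 1 |>.add ((hc 1).pow 2)).add ((hc 2).pow 2)
  have hApos : ∀ y : Fin 3 → ℝ, (0:ℝ) < 1 + (y 1)^2 + (y 2)^2 := by
    intro y; positivity
  have hs : Differentiable ℝ (fun y : Fin 3 → ℝ => Real.sqrt (1 + (y 1)^2 + (y 2)^2)) :=
    fun y => (hA y).sqrt (ne_of_gt (hApos y))
  have hspos : ∀ y : Fin 3 → ℝ, (0:ℝ) < Real.sqrt (1 + (y 1)^2 + (y 2)^2) :=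
    fun y => Real.sqrt_pos.mpr (hApos y)
  have hzk : Differentiable ℝ (fun y : Fin 3 → ℝ => Real.sqrt (1 + (y 1)^2 + (y 2)^2) ^ k) :=
    fun y => (hs y).zpow (Or.inl (ne_of_gt (hspos y)))
  have hxi : Differentiable ℝ (fun y : Fin 3 → ℝ =>
      y 0 / Real.sqrt (1 + (y 1)^2 + (y 2)^2) ^ 3) :=
    by
      simp only [div_eq_mul_inv]
      intro y
      exact (hc 0 y).mul (DifferentiableAt.inv (hs.pow 3 y) (by positivity))
  exact hzk.mul (hG.comp hxi)

lemma wstar_derivs (Wstar : ℝ → ℝ) (hsmooth : ContDiff ℝ (⊤ : ℕ∞) Wstar)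
    (h0 : Wstar 0 = 0) (h1 : deriv Wstar 0 = -1)
    (hstable : ∀ x : ℝ, x = -(Wstar x) - (Wstar x)^3) :
    deriv (deriv Wstar) 0 = 0 ∧ deriv (deriv (deriv Wstar)) 0 = 6 := by
  set u := Wstar with hu
  have hs0 : ContDiff ℝ (↑(⊤:ℕ∞)) u := hsmooth.of_le (by simp)
  have hd0 : Differentiable ℝ u := hs0.differentiable (by norm_num)
  have hs1 : ContDiff ℝ (↑(⊤:ℕ∞)) (deriv u) := (contDiff_infty_iff_deriv.mp hs0).2
  have hd1 : Differentiable ℝ (deriv u) := hs1.differentiable (by norm_num)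
  have hs2 : ContDiff ℝ (↑(⊤:ℕ∞)) (deriv (deriv u)) := (contDiff_infty_iff_deriv.mp hs1).2
  have hd2 : Differentiable ℝ (deriv (deriv u)) := hs2.differentiable (by norm_num)
  -- first identity
  have E1 : ∀ x : ℝ, -(deriv u x) - 3 * (u x)^2 * deriv u x = 1 := by
    intro x
    have hF : HasDerivAt (fun x => -(u x) - (u x)^3)
        (-(deriv u x) - 3 * (u x)^2 * deriv u x) x := by
      have h := ((hd0 x).hasDerivAt.neg).sub (((hd0 x).hasDerivAt).pow 3)
      exact h.congr_deriv (by push_cast [Pi.pow_apply]; ring)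
    have heq : (fun x : ℝ => -(u x) - (u x)^3) = fun x : ℝ => x :=
      funext fun x => (hstable x).symm
    have := hF.deriv
    rw [heq] at this
    simpa using this.symm
  have E2 : ∀ x : ℝ, -(deriv (deriv u) x) - (6 * u x * (deriv u x)^2
      + 3 * (u x)^2 * deriv (deriv u) x) = 0 := by
    intro x
    have hF : HasDerivAt (fun x => -(deriv u x) - 3 * (u x)^2 * deriv u x)
        (-(deriv (deriv u) x) - (6 * u x * (deriv u x)^2
          + 3 * (u x)^2 * deriv (deriv u) x)) x := by
      have h := ((hd1 x).hasDerivAt.neg).sub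
        (((((hd0 x).hasDerivAt).pow 2).const_mul 3).mul (hd1 x).hasDerivAt)
      exact h.congr_deriv (by push_cast [Pi.pow_apply]; ring)
    have heq : (fun x : ℝ => -(deriv u x) - 3 * (u x)^2 * deriv u x) = fun _ : ℝ => 1 :=
      funext E1
    have := hF.deriv
    rw [heq] at this
    simpa using this.symm
  have hu2 : deriv (deriv u) 0 = 0 := by
    have := E2 0
    rw [h0] at this
    -- -(u2 0) - (0 + 0) = 0
    nlinarith [this]
  refine ⟨hu2, ?_⟩
  -- differentiate E2 at 0
  have hF : HasDerivAt (fun x => -(deriv (deriv u) x) - (6 * u x * (deriv u x)^2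
      + 3 * (u x)^2 * deriv (deriv u) x))
      (-(deriv (deriv (deriv u)) 0) - (6 * deriv u 0 * (deriv u 0)^2
        + 6 * u 0 * (2 * deriv u 0 * deriv (deriv u) 0)
        + (6 * u 0 * deriv u 0) * deriv (deriv u) 0
        + 3 * (u 0)^2 * deriv (deriv (deriv u)) 0)) 0 := by
    have h := ((hd2 0).hasDerivAt.neg).sub
      ((((hd0 0).hasDerivAt.const_mul 6).mul (((hd1 0).hasDerivAt).pow 2)).add
        ((((hd0 0).hasDerivAt).pow 2).const_mul 3 |>.mul (hd2 0).hasDerivAt))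
    exact h.congr_deriv (by push_cast [Pi.pow_apply]; ring)
  have heq : (fun x : ℝ => -(deriv (deriv u) x) - (6 * u x * (deriv u x)^2
      + 3 * (u x)^2 * deriv (deriv u) x)) = fun _ : ℝ => 0 := funext E2
  have h3 := hF.deriv
  rw [heq] at h3
  simp only [deriv_const] at h3
  rw [h0, h1, hu2] at h3
  nlinarith [h3]

lemma rpow_conv (x : ℝ) (hx : 0 < x) : x ^ (-(3/2) : ℝ) = (Real.sqrt x ^ 3)⁻¹ := by
  rw [Real.rpow_neg hx.le]
  congr 1
  rw [Real.sqrt_eq_rpow, ← Real.rpow_natCast (x ^ ((1:ℝ)/2)) 3, ← Real.rpow_mul hx.le]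
  norm_num

theorem explicit_burgers_profile_is_generic_solution
    (Wstar : ℝ → ℝ)
    (hsmooth : ContDiff ℝ (⊤ : ℕ∞) Wstar)
    (hodd : ∀ x : ℝ, Wstar (-x) = -(Wstar x))
    (h0 : Wstar 0 = 0) (h1 : deriv Wstar 0 = -1)
    (hdiff : Differentiable ℝ Wstar)
    (hode : ∀ x : ℝ,
      -(1/2) * Wstar x + ((3/2) * x + Wstar x) * deriv Wstar x = 0)
    (hstable : ∀ x : ℝ, x = -(Wstar x) - (Wstar x)^3)
    (Wb : (Fin 3 → ℝ) → ℝ)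
    (hWb : ∀ y : Fin 3 → ℝ,
      Wb y = Real.sqrt (1 + (y 1)^2 + (y 2)^2) *
        Wstar ((1 + (y 1)^2 + (y 2)^2) ^ (-(3/2) : ℝ) * y 0)) :
    (∀ y : Fin 3 → ℝ,
      -(1/2) * Wb y + ((3/2) * y 0 + Wb y) * pd 0 Wb y
        + (y 1 / 2) * pd 1 Wb y + (y 2 / 2) * pd 2 Wb y = 0) ∧
    (∀ i j : Fin 3, pd i (pd j (pd 0 Wb)) 0 =
      if i = j then (if i = 0 then 6 else 2) else 0) ∧
    (Matrix.of fun i j : Fin 3 => pd i (pd j (pd 0 Wb)) 0).PosDef := by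

  -- basic positivity
  have hApos : ∀ y : Fin 3 → ℝ, (0:ℝ) < 1 + (y 1)^2 + (y 2)^2 := fun y => by positivity
  have hspos : ∀ y : Fin 3 → ℝ, (0:ℝ) < Real.sqrt (1 + (y 1)^2 + (y 2)^2) :=
    fun y => Real.sqrt_pos.mpr (hApos y)
  -- smoothness of derivatives of Wstar
  have hs0 : ContDiff ℝ (↑(⊤:ℕ∞)) Wstar := hsmooth.of_le (by simp)
  have hs1 : ContDiff ℝ (↑(⊤:ℕ∞)) (deriv Wstar) := (contDiff_infty_iff_deriv.mp hs0).2
  have hdW1 : Differentiable ℝ (deriv Wstar) := hs1.differentiable (by norm_num)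
  have hs2 : ContDiff ℝ (↑(⊤:ℕ∞)) (deriv (deriv Wstar)) := (contDiff_infty_iff_deriv.mp hs1).2
  have hdW2 : Differentiable ℝ (deriv (deriv Wstar)) := hs2.differentiable (by norm_num)
  -- Wb in sqrt form
  have hWb' : ∀ y : Fin 3 → ℝ,
      Wb y = Real.sqrt (1 + (y 1)^2 + (y 2)^2) ^ (1:ℤ)
        * Wstar (y 0 / Real.sqrt (1 + (y 1)^2 + (y 2)^2) ^ 3) := by
    intro y
    rw [hWb y, rpow_conv _ (hApos y), zpow_one, inv_mul_eq_div]
  have hdWb : Differentiable ℝ Wb := by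
    rw [funext hWb']
    exact diffPi Wstar hdiff 1
  -- first derivatives of Wb
  have hpd0 : ∀ y : Fin 3 → ℝ, pd 0 Wb y
      = Real.sqrt (1 + (y 1)^2 + (y 2)^2) ^ (-2:ℤ)
        * deriv Wstar (y 0 / Real.sqrt (1 + (y 1)^2 + (y 2)^2) ^ 3) := by
    intro y
    rw [pd_eq Wb y 0 (hdWb y)]
    have hrest : (fun t => Wb (Function.update y 0 t))
        = fun t => (Real.sqrt (1 + (y 1)^2 + (y 2)^2) ^ (1:ℤ))
            * Wstar (t / Real.sqrt (1 + (y 1)^2 + (y 2)^2) ^ 3) := by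
      funext t
      rw [hWb']
      simp [Function.update]
    rw [hrest, (axis0 Wstar hdiff _ _ (pow_ne_zero 3 (ne_of_gt (hspos y))) (y 0)).deriv]
    have hs0' : Real.sqrt (1 + (y 1)^2 + (y 2)^2) ≠ 0 := ne_of_gt (hspos y)
    have hpow : Real.sqrt (1 + (y 1)^2 + (y 2)^2) ^ (-2:ℤ)
        = Real.sqrt (1 + (y 1)^2 + (y 2)^2) ^ (1:ℤ) / Real.sqrt (1 + (y 1)^2 + (y 2)^2) ^ 3 := by
      rw [show (-2:ℤ) = 1 - 3 by norm_num, zpow_sub₀ hs0']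
      norm_cast
    rw [hpow]
  have hpd1 : ∀ y : Fin 3 → ℝ, pd 1 Wb y
      = y 1 * Real.sqrt (1 + (y 1)^2 + (y 2)^2) ^ (-1:ℤ)
          * Wstar (y 0 / Real.sqrt (1 + (y 1)^2 + (y 2)^2) ^ 3)
        - 3 * y 1 * y 0 * Real.sqrt (1 + (y 1)^2 + (y 2)^2) ^ (-4:ℤ)
          * deriv Wstar (y 0 / Real.sqrt (1 + (y 1)^2 + (y 2)^2) ^ 3) := by
    intro y
    rw [pd_eq Wb y 1 (hdWb y)]
    have hrest : (fun t => Wb (Function.update y 1 t))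
        = fun t => Real.sqrt (1 + t^2 + (y 2)^2) ^ (1:ℤ)
            * Wstar (y 0 / Real.sqrt (1 + t^2 + (y 2)^2) ^ 3) := by
      funext t
      rw [hWb']
      simp [Function.update]
    rw [hrest, (oneVar Wstar hdiff (y 0) (y 2) 1 (y 1)).deriv]
    norm_num
  have hpd2 : ∀ y : Fin 3 → ℝ, pd 2 Wb y
      = y 2 * Real.sqrt (1 + (y 1)^2 + (y 2)^2) ^ (-1:ℤ)
          * Wstar (y 0 / Real.sqrt (1 + (y 1)^2 + (y 2)^2) ^ 3)
        - 3 * y 2 * y 0 * Real.sqrt (1 + (y 1)^2 + (y 2)^2) ^ (-4:ℤ)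
          * deriv Wstar (y 0 / Real.sqrt (1 + (y 1)^2 + (y 2)^2) ^ 3) := by
    intro y
    rw [pd_eq Wb y 2 (hdWb y)]
    have hrest : (fun t => Wb (Function.update y 2 t))
        = fun t => Real.sqrt (1 + t^2 + (y 1)^2) ^ (1:ℤ)
            * Wstar (y 0 / Real.sqrt (1 + t^2 + (y 1)^2) ^ 3) := by
      funext t
      rw [hWb']
      have harg : 1 + (y 1)^2 + t^2 = 1 + t^2 + (y 1)^2 := by ring
      simp [Function.update, harg]
    rw [hrest, (oneVar Wstar hdiff (y 0) (y 1) 1 (y 2)).deriv]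
    have harg : 1 + (y 2)^2 + (y 1)^2 = 1 + (y 1)^2 + (y 2)^2 := by ring
    rw [harg]
    norm_num
  have hPDE : ∀ y : Fin 3 → ℝ,
      -(1/2) * Wb y + ((3/2) * y 0 + Wb y) * pd 0 Wb y
        + (y 1 / 2) * pd 1 Wb y + (y 2 / 2) * pd 2 Wb y = 0 := by
    intro y
    rw [hWb' y, hpd0 y, hpd1 y, hpd2 y]
    set r := Real.sqrt (1 + (y 1)^2 + (y 2)^2) with hrdef
    have hr0 : r ≠ 0 := ne_of_gt (hspos y)
    have hr2 : r^2 = 1 + (y 1)^2 + (y 2)^2 := Real.sq_sqrt (hApos y).le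
    have hodex := hode (y 0 / r^3)
    have e1 : r ^ (1:ℤ) = r := zpow_one r
    have em1 : r ^ (-1:ℤ) = r⁻¹ := by rw [zpow_neg, zpow_one]
    have em2 : r ^ (-2:ℤ) = (r^2)⁻¹ := by rw [zpow_neg]; norm_cast
    have em4 : r ^ (-4:ℤ) = (r^4)⁻¹ := by rw [zpow_neg]; norm_cast
    rw [e1, em1, em2, em4]
    field_simp
    field_simp at hodex
    linear_combination hodex
      + (3*(y 0)*deriv Wstar (y 0 / r^3) - r^3*Wstar (y 0 / r^3)) * hr2
  -- second derivatives of the first component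
  have hdg0 : Differentiable ℝ (fun y : Fin 3 → ℝ =>
      Real.sqrt (1 + (y 1)^2 + (y 2)^2) ^ (-2:ℤ)
        * deriv Wstar (y 0 / Real.sqrt (1 + (y 1)^2 + (y 2)^2) ^ 3)) :=
    diffPi (deriv Wstar) hdW1 (-2)
  have hq0 : ∀ y : Fin 3 → ℝ, pd 0 (fun y : Fin 3 → ℝ =>
      Real.sqrt (1 + (y 1)^2 + (y 2)^2) ^ (-2:ℤ)
        * deriv Wstar (y 0 / Real.sqrt (1 + (y 1)^2 + (y 2)^2) ^ 3)) y
      = Real.sqrt (1 + (y 1)^2 + (y 2)^2) ^ (-5:ℤ)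
        * deriv (deriv Wstar) (y 0 / Real.sqrt (1 + (y 1)^2 + (y 2)^2) ^ 3) := by
    intro y
    rw [pd_eq _ y 0 (hdg0 y)]
    have hrest : (fun t => (fun y : Fin 3 → ℝ =>
        Real.sqrt (1 + (y 1)^2 + (y 2)^2) ^ (-2:ℤ)
          * deriv Wstar (y 0 / Real.sqrt (1 + (y 1)^2 + (y 2)^2) ^ 3)) (Function.update y 0 t))
        = fun t => (Real.sqrt (1 + (y 1)^2 + (y 2)^2) ^ (-2:ℤ))
            * deriv Wstar (t / Real.sqrt (1 + (y 1)^2 + (y 2)^2) ^ 3) := by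
      funext t
      simp [Function.update]
    rw [hrest, (axis0 (deriv Wstar) hdW1 _ _ (pow_ne_zero 3 (ne_of_gt (hspos y))) (y 0)).deriv]
    have hs0' : Real.sqrt (1 + (y 1)^2 + (y 2)^2) ≠ 0 := ne_of_gt (hspos y)
    have hpow : Real.sqrt (1 + (y 1)^2 + (y 2)^2) ^ (-5:ℤ)
        = Real.sqrt (1 + (y 1)^2 + (y 2)^2) ^ (-2:ℤ) / Real.sqrt (1 + (y 1)^2 + (y 2)^2) ^ 3 := by
      rw [show (-5:ℤ) = -2 - 3 by norm_num, zpow_sub₀ hs0']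
      norm_cast
    rw [hpow]
  have hq1 : ∀ y : Fin 3 → ℝ, pd 1 (fun y : Fin 3 → ℝ =>
      Real.sqrt (1 + (y 1)^2 + (y 2)^2) ^ (-2:ℤ)
        * deriv Wstar (y 0 / Real.sqrt (1 + (y 1)^2 + (y 2)^2) ^ 3)) y
      = (-2 * y 1) * (Real.sqrt (1 + (y 1)^2 + (y 2)^2) ^ (-4:ℤ)
            * deriv Wstar (y 0 / Real.sqrt (1 + (y 1)^2 + (y 2)^2) ^ 3))
        - (3 * (y 1 * y 0)) * (Real.sqrt (1 + (y 1)^2 + (y 2)^2) ^ (-7:ℤ)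
            * deriv (deriv Wstar) (y 0 / Real.sqrt (1 + (y 1)^2 + (y 2)^2) ^ 3)) := by
    intro y
    rw [pd_eq _ y 1 (hdg0 y)]
    have hrest : (fun t => (fun y : Fin 3 → ℝ =>
        Real.sqrt (1 + (y 1)^2 + (y 2)^2) ^ (-2:ℤ)
          * deriv Wstar (y 0 / Real.sqrt (1 + (y 1)^2 + (y 2)^2) ^ 3)) (Function.update y 1 t))
        = fun t => Real.sqrt (1 + t^2 + (y 2)^2) ^ (-2:ℤ)
            * deriv Wstar (y 0 / Real.sqrt (1 + t^2 + (y 2)^2) ^ 3) := by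
      funext t
      simp [Function.update]
    rw [hrest, (oneVar (deriv Wstar) hdW1 (y 0) (y 2) (-2) (y 1)).deriv]
    norm_num
    ring
  have hq2 : ∀ y : Fin 3 → ℝ, pd 2 (fun y : Fin 3 → ℝ =>
      Real.sqrt (1 + (y 1)^2 + (y 2)^2) ^ (-2:ℤ)
        * deriv Wstar (y 0 / Real.sqrt (1 + (y 1)^2 + (y 2)^2) ^ 3)) y
      = (-2 * y 2) * (Real.sqrt (1 + (y 1)^2 + (y 2)^2) ^ (-4:ℤ)
            * deriv Wstar (y 0 / Real.sqrt (1 + (y 1)^2 + (y 2)^2) ^ 3))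
        - (3 * (y 2 * y 0)) * (Real.sqrt (1 + (y 1)^2 + (y 2)^2) ^ (-7:ℤ)
            * deriv (deriv Wstar) (y 0 / Real.sqrt (1 + (y 1)^2 + (y 2)^2) ^ 3)) := by
    intro y
    rw [pd_eq _ y 2 (hdg0 y)]
    have hrest : (fun t => (fun y : Fin 3 → ℝ =>
        Real.sqrt (1 + (y 1)^2 + (y 2)^2) ^ (-2:ℤ)
          * deriv Wstar (y 0 / Real.sqrt (1 + (y 1)^2 + (y 2)^2) ^ 3)) (Function.update y 2 t))
        = fun t => Real.sqrt (1 + t^2 + (y 1)^2) ^ (-2:ℤ)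
            * deriv Wstar (y 0 / Real.sqrt (1 + t^2 + (y 1)^2) ^ 3) := by
      funext t
      have harg : 1 + (y 1)^2 + t^2 = 1 + t^2 + (y 1)^2 := by ring
      simp [Function.update, harg]
    rw [hrest, (oneVar (deriv Wstar) hdW1 (y 0) (y 1) (-2) (y 2)).deriv]
    have harg : 1 + (y 2)^2 + (y 1)^2 = 1 + (y 1)^2 + (y 2)^2 := by ring
    rw [harg]
    norm_num
    ring
  obtain ⟨hu2, hu3⟩ := wstar_derivs Wstar hsmooth h0 h1 hstable
  have hcoord : ∀ i : Fin 3, Differentiable ℝ (fun y : Fin 3 → ℝ => y i) :=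
    fun i => differentiable_pi.mp differentiable_id i
  have hdq1 : Differentiable ℝ (fun y : Fin 3 → ℝ =>
      (-2 * y 1) * (Real.sqrt (1 + (y 1)^2 + (y 2)^2) ^ (-4:ℤ)
            * deriv Wstar (y 0 / Real.sqrt (1 + (y 1)^2 + (y 2)^2) ^ 3))
        - (3 * (y 1 * y 0)) * (Real.sqrt (1 + (y 1)^2 + (y 2)^2) ^ (-7:ℤ)
            * deriv (deriv Wstar) (y 0 / Real.sqrt (1 + (y 1)^2 + (y 2)^2) ^ 3))) := by
    exact (((hcoord 1).const_mul (-2)).mul (diffPi (deriv Wstar) hdW1 (-4))).sub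
      ((((hcoord 1).mul (hcoord 0)).const_mul 3).mul (diffPi (deriv (deriv Wstar)) hdW2 (-7)))
  have hdq2 : Differentiable ℝ (fun y : Fin 3 → ℝ =>
      (-2 * y 2) * (Real.sqrt (1 + (y 1)^2 + (y 2)^2) ^ (-4:ℤ)
            * deriv Wstar (y 0 / Real.sqrt (1 + (y 1)^2 + (y 2)^2) ^ 3))
        - (3 * (y 2 * y 0)) * (Real.sqrt (1 + (y 1)^2 + (y 2)^2) ^ (-7:ℤ)
            * deriv (deriv Wstar) (y 0 / Real.sqrt (1 + (y 1)^2 + (y 2)^2) ^ 3))) := by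
    exact (((hcoord 2).const_mul (-2)).mul (diffPi (deriv Wstar) hdW1 (-4))).sub
      ((((hcoord 2).mul (hcoord 0)).const_mul 3).mul (diffPi (deriv (deriv Wstar)) hdW2 (-7)))
  have hg0fun : pd 0 Wb = fun y : Fin 3 → ℝ =>
      Real.sqrt (1 + (y 1)^2 + (y 2)^2) ^ (-2:ℤ)
        * deriv Wstar (y 0 / Real.sqrt (1 + (y 1)^2 + (y 2)^2) ^ 3) := funext hpd0
  -- the nine third derivatives at the origin
  have hH : ∀ i j : Fin 3, pd i (pd j (pd 0 Wb)) 0 =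
      if i = j then (if i = 0 then 6 else 2) else 0 := by
    have E00 : pd 0 (pd 0 (pd 0 Wb)) 0 = 6 := by
      rw [hg0fun, funext hq0]
      rw [pd_eq _ 0 0 (diffPi (deriv (deriv Wstar)) hdW2 (-5) 0)]
      have hrest : (fun t => (fun y : Fin 3 → ℝ =>
          Real.sqrt (1 + (y 1)^2 + (y 2)^2) ^ (-5:ℤ)
            * deriv (deriv Wstar) (y 0 / Real.sqrt (1 + (y 1)^2 + (y 2)^2) ^ 3))
            (Function.update (0 : Fin 3 → ℝ) 0 t))
          = deriv (deriv Wstar) := by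
        funext t
        simp [Function.update]
      rw [hrest]
      simpa using hu3
    have E10 : pd 1 (pd 0 (pd 0 Wb)) 0 = 0 := by
      rw [hg0fun, funext hq0]
      rw [pd_eq _ 0 1 (diffPi (deriv (deriv Wstar)) hdW2 (-5) 0)]
      have hrest : (fun t => (fun y : Fin 3 → ℝ =>
          Real.sqrt (1 + (y 1)^2 + (y 2)^2) ^ (-5:ℤ)
            * deriv (deriv Wstar) (y 0 / Real.sqrt (1 + (y 1)^2 + (y 2)^2) ^ 3))
            (Function.update (0 : Fin 3 → ℝ) 1 t))
          = fun _ => (0:ℝ) := by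
        funext t
        simp [Function.update, hu2]
      rw [hrest]
      simp
    have E20 : pd 2 (pd 0 (pd 0 Wb)) 0 = 0 := by
      rw [hg0fun, funext hq0]
      rw [pd_eq _ 0 2 (diffPi (deriv (deriv Wstar)) hdW2 (-5) 0)]
      have hrest : (fun t => (fun y : Fin 3 → ℝ =>
          Real.sqrt (1 + (y 1)^2 + (y 2)^2) ^ (-5:ℤ)
            * deriv (deriv Wstar) (y 0 / Real.sqrt (1 + (y 1)^2 + (y 2)^2) ^ 3))
            (Function.update (0 : Fin 3 → ℝ) 2 t))
          = fun _ => (0:ℝ) := by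
        funext t
        simp [Function.update, hu2]
      rw [hrest]
      simp
    have E01 : pd 0 (pd 1 (pd 0 Wb)) 0 = 0 := by
      rw [hg0fun, funext hq1]
      rw [pd_eq _ 0 0 (hdq1 0)]
      have hrest : (fun t => (fun y : Fin 3 → ℝ =>
          (-2 * y 1) * (Real.sqrt (1 + (y 1)^2 + (y 2)^2) ^ (-4:ℤ)
                * deriv Wstar (y 0 / Real.sqrt (1 + (y 1)^2 + (y 2)^2) ^ 3))
            - (3 * (y 1 * y 0)) * (Real.sqrt (1 + (y 1)^2 + (y 2)^2) ^ (-7:ℤ)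
                * deriv (deriv Wstar) (y 0 / Real.sqrt (1 + (y 1)^2 + (y 2)^2) ^ 3)))
            (Function.update (0 : Fin 3 → ℝ) 0 t))
          = fun _ => (0:ℝ) := by
        funext t
        simp [Function.update]
      rw [hrest]
      simp
    have E11 : pd 1 (pd 1 (pd 0 Wb)) 0 = 2 := by
      rw [hg0fun, funext hq1]
      rw [pd_eq _ 0 1 (hdq1 0)]
      have hrest : (fun t => (fun y : Fin 3 → ℝ =>
          (-2 * y 1) * (Real.sqrt (1 + (y 1)^2 + (y 2)^2) ^ (-4:ℤ)
                * deriv Wstar (y 0 / Real.sqrt (1 + (y 1)^2 + (y 2)^2) ^ 3))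
            - (3 * (y 1 * y 0)) * (Real.sqrt (1 + (y 1)^2 + (y 2)^2) ^ (-7:ℤ)
                * deriv (deriv Wstar) (y 0 / Real.sqrt (1 + (y 1)^2 + (y 2)^2) ^ 3)))
            (Function.update (0 : Fin 3 → ℝ) 1 t))
          = fun t => (2 * t) * Real.sqrt (1 + t^2) ^ (-4:ℤ) := by
        funext t
        simp [Function.update, h1]
      rw [show ((0 : Fin 3 → ℝ) 1) = (0:ℝ) from rfl]
      rw [hrest]
      have hc : HasDerivAt (fun t : ℝ => 2 * t) 2 0 := by
        simpa using (hasDerivAt_id (0:ℝ)).const_mul 2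
      have hd := oneVar (fun _ : ℝ => (1:ℝ)) (differentiable_const 1) 0 0 (-4) 0
      simp only [mul_one, add_zero, zero_div, ne_eq, OfNat.ofNat_ne_zero,
        not_false_eq_true, zero_pow, mul_zero, zero_mul, sub_zero, Int.cast_neg,
        Int.cast_ofNat] at hd
      have h := hc.mul hd
      rw [show (fun t : ℝ => 2 * t * Real.sqrt (1 + t^2) ^ (-4:ℤ)) = ((fun t : ℝ => 2 * t) * fun s => Real.sqrt (1 + s^2) ^ (-4:ℤ)) from rfl, h.deriv]
      norm_num [Real.sqrt_one]
    have E21 : pd 2 (pd 1 (pd 0 Wb)) 0 = 0 := by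
      rw [hg0fun, funext hq1]
      rw [pd_eq _ 0 2 (hdq1 0)]
      have hrest : (fun t => (fun y : Fin 3 → ℝ =>
          (-2 * y 1) * (Real.sqrt (1 + (y 1)^2 + (y 2)^2) ^ (-4:ℤ)
                * deriv Wstar (y 0 / Real.sqrt (1 + (y 1)^2 + (y 2)^2) ^ 3))
            - (3 * (y 1 * y 0)) * (Real.sqrt (1 + (y 1)^2 + (y 2)^2) ^ (-7:ℤ)
                * deriv (deriv Wstar) (y 0 / Real.sqrt (1 + (y 1)^2 + (y 2)^2) ^ 3)))
            (Function.update (0 : Fin 3 → ℝ) 2 t))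
          = fun _ => (0:ℝ) := by
        funext t
        simp [Function.update]
      rw [hrest]
      simp
    have E02 : pd 0 (pd 2 (pd 0 Wb)) 0 = 0 := by
      rw [hg0fun, funext hq2]
      rw [pd_eq _ 0 0 (hdq2 0)]
      have hrest : (fun t => (fun y : Fin 3 → ℝ =>
          (-2 * y 2) * (Real.sqrt (1 + (y 1)^2 + (y 2)^2) ^ (-4:ℤ)
                * deriv Wstar (y 0 / Real.sqrt (1 + (y 1)^2 + (y 2)^2) ^ 3))
            - (3 * (y 2 * y 0)) * (Real.sqrt (1 + (y 1)^2 + (y 2)^2) ^ (-7:ℤ)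
                * deriv (deriv Wstar) (y 0 / Real.sqrt (1 + (y 1)^2 + (y 2)^2) ^ 3)))
            (Function.update (0 : Fin 3 → ℝ) 0 t))
          = fun _ => (0:ℝ) := by
        funext t
        simp [Function.update]
      rw [hrest]
      simp
    have E12 : pd 1 (pd 2 (pd 0 Wb)) 0 = 0 := by
      rw [hg0fun, funext hq2]
      rw [pd_eq _ 0 1 (hdq2 0)]
      have hrest : (fun t => (fun y : Fin 3 → ℝ =>
          (-2 * y 2) * (Real.sqrt (1 + (y 1)^2 + (y 2)^2) ^ (-4:ℤ)
                * deriv Wstar (y 0 / Real.sqrt (1 + (y 1)^2 + (y 2)^2) ^ 3))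
            - (3 * (y 2 * y 0)) * (Real.sqrt (1 + (y 1)^2 + (y 2)^2) ^ (-7:ℤ)
                * deriv (deriv Wstar) (y 0 / Real.sqrt (1 + (y 1)^2 + (y 2)^2) ^ 3)))
            (Function.update (0 : Fin 3 → ℝ) 1 t))
          = fun _ => (0:ℝ) := by
        funext t
        simp [Function.update]
      rw [hrest]
      simp
    have E22 : pd 2 (pd 2 (pd 0 Wb)) 0 = 2 := by
      rw [hg0fun, funext hq2]
      rw [pd_eq _ 0 2 (hdq2 0)]
      have hrest : (fun t => (fun y : Fin 3 → ℝ =>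
          (-2 * y 2) * (Real.sqrt (1 + (y 1)^2 + (y 2)^2) ^ (-4:ℤ)
                * deriv Wstar (y 0 / Real.sqrt (1 + (y 1)^2 + (y 2)^2) ^ 3))
            - (3 * (y 2 * y 0)) * (Real.sqrt (1 + (y 1)^2 + (y 2)^2) ^ (-7:ℤ)
                * deriv (deriv Wstar) (y 0 / Real.sqrt (1 + (y 1)^2 + (y 2)^2) ^ 3)))
            (Function.update (0 : Fin 3 → ℝ) 2 t))
          = fun t => (2 * t) * Real.sqrt (1 + t^2) ^ (-4:ℤ) := by
        funext t
        have harg : 1 + (0:ℝ)^2 + t^2 = 1 + t^2 := by ring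
        simp [Function.update, h1, harg]
      rw [show ((0 : Fin 3 → ℝ) 2) = (0:ℝ) from rfl]
      rw [hrest]
      have hc : HasDerivAt (fun t : ℝ => 2 * t) 2 0 := by
        simpa using (hasDerivAt_id (0:ℝ)).const_mul 2
      have hd := oneVar (fun _ : ℝ => (1:ℝ)) (differentiable_const 1) 0 0 (-4) 0
      simp only [mul_one, add_zero, zero_div, ne_eq, OfNat.ofNat_ne_zero,
        not_false_eq_true, zero_pow, mul_zero, zero_mul, sub_zero, Int.cast_neg,
        Int.cast_ofNat] at hd
      have h := hc.mul hd
      rw [show (fun t : ℝ => 2 * t * Real.sqrt (1 + t^2) ^ (-4:ℤ)) = ((fun t : ℝ => 2 * t) * fun s => Real.sqrt (1 + s^2) ^ (-4:ℤ)) from rfl, h.deriv]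
      norm_num [Real.sqrt_one]
    intro i j
    fin_cases i <;> fin_cases j <;>
      simp only [if_true, if_false] <;>
      norm_num <;>
      first
        | exact E00 | exact E01 | exact E02
        | exact E10 | exact E11 | exact E12
        | exact E20 | exact E21 | exact E22
  refine ⟨hPDE, hH, ?_⟩
  have hM : (Matrix.of fun i j : Fin 3 => pd i (pd j (pd 0 Wb)) 0)
      = Matrix.diagonal ![6, 2, 2] := by
    ext i j
    rw [Matrix.of_apply, hH i j]
    fin_cases i <;> fin_cases j <;> simp [Matrix.diagonal]
  rw [hM]
  refine Matrix.PosDef.diagonal ?_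
  intro i
  fin_cases i <;> norm_num
end

section
/- Lemma (propagation of compact support). Under the bootstrap assumptions of Proposition 4.1 and the modulation-variable bounds |κ̇|≤M, |ξ̇|≤M^{1/2}, |T*|≤3Mε², if the initial electron density n_{e,0} is supported in the set X={|x₁|≤ε^{1/2}, |x̌|≤ε^{1/6}}, then for every s ≥ −log ε the self-similar sound speed S(·,s) (equivalently, the electron density) is supported in the set X(s)={|y₁|≤2ε^{1/2}e^{3s/2}, |y̌|≤2ε^{1/6}e^{s/2}}. The proof uses that along the Lagrangian flow φ(x₀,t) of the velocity (2/(1+α))(ũ−ξ̇), the sound speed satisfies σ̃(φ(x₀,t),t)=σ̃(x₀,0)·exp(−(2α/(1+α))∫_{−ε}^{t}(∇·ũ)∘φ(x₀,δ)dδ), so vanishing of σ̃ propagates along trajectories, and the trajectories move by at most ‖ũ−ξ̇‖_{L∞}·T* < ε^{1/2}. -/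
/-!
Along the backward characteristic `f` of the field `w = 2(u - ξ')/(1+α)` ending at `(x, t)`,
the chain rule turns the transport equation into the linear ODE
`(σ ∘ f)' = -(2α/(1+α)) (∇·u ∘ f) (σ ∘ f)`, whose coefficient is bounded on the compact set
swept by the characteristic. By Grönwall, `σ (x, t) ≠ 0` forces `σ ≠ 0` at the foot `x₀ = f (-ε)`,
which lies in the initial support. The characteristic has speed at most `4M` and runs for a time
at most `T* + ε ≤ 2ε`, so `‖x - x₀‖ ≤ 8Mε`, which is negligible against `ε^{1/2}` and `ε^{1/6}`.
-/

open Set Metric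
open scoped NNReal

theorem exists_backward_integralCurve {E : Type*} [NormedAddCommGroup E] [NormedSpace ℝ E]
    [CompleteSpace E] {V : ℝ → E → E} {a b C : ℝ} {L : ℝ≥0} (x : E) (hab : a ≤ b)
    (hcont : ∀ y, ContinuousOn (fun t => V t y) (Icc a b))
    (hlip : ∀ t ∈ Icc a b, LipschitzOnWith L (V t) (closedBall x (C * (b - a))))
    (hbound : ∀ t ∈ Icc a b, ∀ y, ‖V t y‖ ≤ C) :
    ∃ f : ℝ → E, f b = x ∧ ∀ t ∈ Icc a b,
      HasDerivWithinAt f (V t (f t)) (Icc a b) t ∧ ‖f t - x‖ ≤ C * (b - t) := by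
  have hb : b ∈ Icc a b := ⟨hab, le_rfl⟩
  have hC : 0 ≤ C := (norm_nonneg _).trans (hbound b hb x)
  have hPL : IsPicardLindelof V (⟨b, hb⟩ : Icc a b) x
      ⟨C * (b - a), mul_nonneg hC (sub_nonneg.2 hab)⟩ 0 ⟨C, hC⟩ L :=
    { lipschitzOnWith := hlip
      continuousOn := fun y _ => hcont y
      norm_le := fun t ht y _ => hbound t ht y
      mul_max_le := by simp [hab]; exact le_rfl }
  obtain ⟨f, hfb, hf⟩ := hPL.exists_eq_forall_mem_Icc_hasDerivWithinAt₀
  refine ⟨f, hfb, fun t ht => ⟨hf t ht, ?_⟩⟩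
  have hmv := (convex_Icc a b).norm_image_sub_le_of_norm_hasDerivWithin_le hf
    (fun s hs => hbound s hs (f s)) hb ht
  rwa [hfb, Real.norm_eq_abs, abs_sub_comm, abs_of_nonneg (sub_nonneg.2 ht.2)] at hmv

theorem ContDiff.exists_lipschitzOnWith_slice {E F : Type*} [NormedAddCommGroup E]
    [NormedSpace ℝ E] [ProperSpace E] [NormedAddCommGroup F] [NormedSpace ℝ F]
    {U : E → ℝ → F} (hU : ContDiff ℝ 1 (fun p : E × ℝ => U p.1 p.2)) (x : E) (R a b : ℝ) :
    ∃ L, ∀ t ∈ Icc a b, LipschitzOnWith L (fun y => U y t) (closedBall x R) := by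
  obtain ⟨L, hL⟩ := hU.contDiffOn.exists_lipschitzOnWith one_ne_zero
    ((convex_closedBall x R).prod (convex_Icc a b)) ((isCompact_closedBall x R).prod isCompact_Icc)
  refine ⟨L, fun t ht y hy z hz => ?_⟩
  simpa [Prod.edist_eq] using hL (mk_mem_prod hy ht) (mk_mem_prod hz ht)

section PartialDerivatives

variable {σ : (Fin 3 → ℝ) → ℝ → ℝ}

theorem pd_eq_fderiv_uncurry {y : Fin 3 → ℝ} {t : ℝ}
    (hσ : DifferentiableAt ℝ (fun p : (Fin 3 → ℝ) × ℝ => σ p.1 p.2) (y, t)) (i : Fin 3) :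
    pd i (fun z => σ z t) y =
      fderiv ℝ (fun p : (Fin 3 → ℝ) × ℝ => σ p.1 p.2) (y, t) (Pi.single i 1, 0) := by
  have h : HasFDerivAt (fun z => σ z t)
      ((fderiv ℝ (fun p : (Fin 3 → ℝ) × ℝ => σ p.1 p.2) (y, t)).comp
        (ContinuousLinearMap.inl ℝ (Fin 3 → ℝ) ℝ)) y :=
    (hσ.hasFDerivAt.comp y (hasFDerivAt_prodMk_left (𝕜 := ℝ) y t) :)
  simp [pd, h.fderiv]

theorem continuous_pd (hσ : ContDiff ℝ 1 (fun p : (Fin 3 → ℝ) × ℝ => σ p.1 p.2)) (i : Fin 3) :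
    Continuous (fun p : (Fin 3 → ℝ) × ℝ => pd i (fun z => σ z p.2) p.1) := by
  have hd := hσ.differentiable one_ne_zero
  simp_rw [fun p : (Fin 3 → ℝ) × ℝ => pd_eq_fderiv_uncurry (hd p) i]
  exact (hσ.continuous_fderiv one_ne_zero).clm_apply continuous_const

theorem hasDerivWithinAt_comp_curve {f : ℝ → Fin 3 → ℝ} {v : Fin 3 → ℝ} {s : Set ℝ} {t : ℝ}
    (hσ : DifferentiableAt ℝ (fun p : (Fin 3 → ℝ) × ℝ => σ p.1 p.2) (f t, t))
    (hf : HasDerivWithinAt f v s t) :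
    HasDerivWithinAt (fun τ => σ (f τ) τ)
      (∑ i, v i * pd i (fun z => σ z t) (f t) + deriv (σ (f t)) t) s t := by
  set D := fderiv ℝ (fun p : (Fin 3 → ℝ) × ℝ => σ p.1 p.2) (f t, t)
  have hpath : HasDerivWithinAt (fun τ => (f τ, τ)) (v, 1) s t :=
    hf.prodMk (hasDerivWithinAt_id t s)
  have hcurve := HasFDerivAt.comp_hasDerivWithinAt_of_eq t hσ.hasFDerivAt hpath rfl
  have htime : deriv (σ (f t)) t = D (0, 1) :=
    (hσ.hasFDerivAt.comp_hasDerivAt t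
      ((hasDerivAt_const t (f t)).prodMk (hasDerivAt_id t))).deriv
  have hsplit : (v, (1 : ℝ)) = ∑ i, v i • ((Pi.single i 1 : Fin 3 → ℝ), (0 : ℝ)) + (0, 1) := by
    ext j <;> simp [Prod.fst_sum, Prod.snd_sum, Finset.sum_apply, Pi.single_apply]
  refine hcurve.congr_deriv ?_
  rw [htime, hsplit, map_add, map_sum]
  simp only [map_smul, smul_eq_mul, pd_eq_fderiv_uncurry hσ, D]

end PartialDerivatives

theorem exists_ne_zero_initial_of_transport {w : ℝ → (Fin 3 → ℝ) → Fin 3 → ℝ}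
    {c σ : (Fin 3 → ℝ) → ℝ → ℝ} {a T C : ℝ}
    (hσ : ContDiff ℝ 1 (fun p : (Fin 3 → ℝ) × ℝ => σ p.1 p.2))
    (hc : Continuous (fun p : (Fin 3 → ℝ) × ℝ => c p.1 p.2))
    (hw_cont : ∀ y, Continuous (fun t => w t y))
    (hw_lip : ∀ x R b, ∃ L, ∀ t ∈ Icc a b, LipschitzOnWith L (w t) (closedBall x R))
    (hw_bound : ∀ t ∈ Ico a T, ∀ y, ‖w t y‖ ≤ C)
    (heq : ∀ y, ∀ t ∈ Ico a T,
      deriv (σ y) t + ∑ i, w t y i * pd i (fun z => σ z t) y + c y t * σ y t = 0)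
    {t : ℝ} (ht : t ∈ Ico a T) {x : Fin 3 → ℝ} (hx : σ x t ≠ 0) :
    ∃ x₀, σ x₀ a ≠ 0 ∧ ‖x - x₀‖ ≤ C * (t - a) := by
  have hsub : Icc a t ⊆ Ico a T := Icc_subset_Ico_right ht.2
  have hC : 0 ≤ C := (norm_nonneg _).trans (hw_bound t ht x)
  obtain ⟨L, hL⟩ := hw_lip x (C * (t - a)) t
  obtain ⟨f, hft, hf⟩ := exists_backward_integralCurve x ht.1
    (fun y => (hw_cont y).continuousOn) hL (fun s hs => hw_bound s (hsub hs))
  have hf_mem : ∀ s ∈ Icc a t, (f s, s) ∈ closedBall x (C * (t - a)) ×ˢ Icc a t := by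
    refine fun s hs => ⟨?_, hs⟩
    rw [mem_closedBall, dist_eq_norm]
    exact (hf s hs).2.trans (by gcongr; exact hs.1)
  obtain ⟨K, hK⟩ := ((isCompact_closedBall x _).prod isCompact_Icc).exists_bound_of_continuousOn
    hc.continuousOn
  have hg : ∀ s ∈ Icc a t, HasDerivWithinAt (fun τ => σ (f τ) τ)
      (-c (f s) s * σ (f s) s) (Icc a t) s := by
    intro s hs
    refine (hasDerivWithinAt_comp_curve ((hσ.differentiable one_ne_zero) _)
      (hf s hs).1).congr_deriv ?_
    linarith [heq (f s) s (hsub hs)]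
  refine ⟨f a, fun ha => hx ?_, ?_⟩
  · have hvanish := eq_zero_of_abs_deriv_le_mul_abs_self_of_eq_zero_right (K := K)
      (fun s hs => (hg s hs).continuousWithinAt)
      (fun s hs => (hg s (Ico_subset_Icc_self hs)).mono_of_mem_nhdsWithin
        (Icc_mem_nhdsGE_of_mem hs))
      ha (fun s hs => ?_) t ⟨ht.1, le_rfl⟩
    · rwa [hft] at hvanish
    · rw [norm_mul, norm_neg]
      exact mul_le_mul_of_nonneg_right (hK _ (hf_mem s (Ico_subset_Icc_self hs))) (norm_nonneg _)
  · simpa [norm_sub_rev] using (hf a ⟨le_rfl, ht.1⟩).2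

theorem mul_le_rpow_of_sq_mul_le {ε K p : ℝ} (hε : 0 < ε) (hε1 : ε ≤ 1) (hp : p ≤ 1 / 2)
    (hK : 0 ≤ K) (h : K ^ 2 * ε ≤ 1) : K * ε ≤ ε ^ p := by
  have hKε : K * √ε ≤ 1 := by
    rw [← Real.sqrt_sq hK, ← Real.sqrt_mul (sq_nonneg K)]
    exact Real.sqrt_le_one.mpr h
  calc K * ε = (K * √ε) * √ε := by rw [mul_assoc, Real.mul_self_sqrt hε.le]
    _ ≤ √ε := mul_le_of_le_one_left (Real.sqrt_nonneg ε) hKε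
    _ = ε ^ (1 / 2 : ℝ) := Real.sqrt_eq_rpow ε
    _ ≤ ε ^ p := Real.rpow_le_rpow_of_exponent_ge hε hε1 hp

theorem sqrt_sq_add_sq_le_add_abs_sub (a b c d : ℝ) :
    √(a ^ 2 + b ^ 2) ≤ √(c ^ 2 + d ^ 2) + (|a - c| + |b - d|) := by
  calc √(a ^ 2 + b ^ 2) = ‖(⟨a, b⟩ : ℂ)‖ := (Complex.norm_eq_sqrt_sq_add_sq ⟨a, b⟩).symm
    _ ≤ ‖(⟨c, d⟩ : ℂ)‖ + ‖(⟨a, b⟩ - ⟨c, d⟩ : ℂ)‖ := norm_le_norm_add_norm_sub' _ _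
    _ ≤ √(c ^ 2 + d ^ 2) + (|a - c| + |b - d|) := by
      rw [Complex.norm_eq_sqrt_sq_add_sq ⟨c, d⟩]
      exact add_le_add_right (Complex.norm_le_abs_re_add_abs_im _) _

theorem coord_bounds_of_norm_sub_le {x x₀ : Fin 3 → ℝ} {D : ℝ} (h : ‖x - x₀‖ ≤ D) :
    |x 0| ≤ |x₀ 0| + D ∧ √(x 1 ^ 2 + x 2 ^ 2) ≤ √(x₀ 1 ^ 2 + x₀ 2 ^ 2) + 2 * D := by
  have hcoord : ∀ i, |x i - x₀ i| ≤ D := fun i => (norm_le_pi_norm (x - x₀) i).trans h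
  constructor
  · linarith [abs_sub_abs_le_abs_sub (x 0) (x₀ 0), hcoord 0]
  · linarith [sqrt_sq_add_sq_le_add_abs_sub (x 1) (x 2) (x₀ 1) (x₀ 2), hcoord 1, hcoord 2]

theorem exists_ne_zero_initial_of_sound_speed {α a T B : ℝ} {u : (Fin 3 → ℝ) → ℝ → Fin 3 → ℝ}
    {σ : (Fin 3 → ℝ) → ℝ → ℝ} {ξ' : ℝ → Fin 3 → ℝ} (hα : 0 ≤ α)
    (hσ : ContDiff ℝ 1 (fun p : (Fin 3 → ℝ) × ℝ => σ p.1 p.2))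
    (hu : ∀ i : Fin 3, ContDiff ℝ 1 (fun p : (Fin 3 → ℝ) × ℝ => u p.1 p.2 i))
    (hξ : Continuous ξ') (hrel : ∀ t ∈ Ico a T, ∀ y, ‖u y t - ξ' t‖ ≤ B)
    (htransport : ∀ (y : Fin 3 → ℝ), ∀ t ∈ Ico a T,
      ((1 + α) / 2) * deriv (fun t' => σ y t') t
        + (∑ i, (u y t i - ξ' t i) * pd i (fun z => σ z t) y)
        + α * σ y t * (∑ i, pd i (fun z => u z t i) y) = 0)
    {t : ℝ} (ht : t ∈ Ico a T) {x : Fin 3 → ℝ} (hx : σ x t ≠ 0) :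
    ∃ x₀, σ x₀ a ≠ 0 ∧ ‖x - x₀‖ ≤ 2 * B * (t - a) := by
  have hU : ContDiff ℝ 1 (fun p : (Fin 3 → ℝ) × ℝ => u p.1 p.2) := contDiff_pi.2 hu
  have hspeed : 2 / (1 + α) ≤ 2 := div_le_self zero_le_two (by linarith)
  have hw_bound : ∀ s ∈ Ico a T, ∀ y, ‖(2 / (1 + α)) • (u y s - ξ' s)‖ ≤ 2 * B := by
    intro s hs y
    have hB : 0 ≤ B := (norm_nonneg _).trans (hrel s hs y)
    rw [norm_smul, Real.norm_of_nonneg (by positivity)]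
    exact mul_le_mul hspeed (hrel s hs y) (norm_nonneg _) zero_le_two
  have heq : ∀ y, ∀ s ∈ Ico a T, deriv (σ y) s
      + ∑ i, ((2 / (1 + α)) • (u y s - ξ' s)) i * pd i (fun z => σ z s) y
      + (2 * α / (1 + α) * ∑ i, pd i (fun z => u z s i) y) * σ y s = 0 := by
    intro y s hs
    have h := htransport y s hs
    simp only [Pi.smul_apply, Pi.sub_apply, smul_eq_mul, mul_assoc, ← Finset.mul_sum]
    field_simp
    linear_combination 2 * h
  refine exists_ne_zero_initial_of_transport
    (w := fun t y => (2 / (1 + α)) • (u y t - ξ' t))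
    (c := fun y t => 2 * α / (1 + α) * ∑ i, pd i (fun z => u z t i) y) hσ
    (continuous_const.mul (continuous_finsetSum _ fun i _ =>
      continuous_pd (σ := fun z t => u z t i) (hu i) i))
    (fun y => ?_) (fun y R b => ?_) hw_bound heq ht hx
  · have hu_y : Continuous fun t => u y t :=
      hU.continuous.comp (continuous_const.prodMk continuous_id)
    fun_prop
  · obtain ⟨L, hL⟩ := hU.exists_lipschitzOnWith_slice y R a b
    exact ⟨_, fun s hs => ((lipschitzWith_smul (2 / (1 + α))).comp
      (IsometryEquiv.subRight (ξ' s)).isometry.lipschitz).comp_lipschitzOnWith (hL s hs)⟩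


theorem propagation_of_compact_support_general
    (α : ℝ) (hα : 0 < α) :
    ∀ M : ℝ, 1 ≤ M → ∃ ε0 : ℝ, 0 < ε0 ∧ ∀ ε : ℝ, 0 < ε → ε < ε0 →
    ∀ (u : (Fin 3 → ℝ) → ℝ → Fin 3 → ℝ) (σ : (Fin 3 → ℝ) → ℝ → ℝ)
      (ξ' : ℝ → Fin 3 → ℝ) (Tstar : ℝ),
      -- blowup time bound (modulation)
      |Tstar| ≤ 3 * M * ε^2 → -ε < Tstar →
      -- regularity
      ContDiff ℝ 1 (fun p : (Fin 3 → ℝ) × ℝ => σ p.1 p.2) →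
      (∀ i : Fin 3, ContDiff ℝ 1 (fun p : (Fin 3 → ℝ) × ℝ => u p.1 p.2 i)) →
      Continuous (fun t => ξ' t) →
      -- bootstrap/modulation bounds on the velocity and on ξ̇
      (∀ (x : Fin 3 → ℝ) (t : ℝ), t ∈ Set.Ico (-ε) Tstar → ∀ i : Fin 3,
        |u x t i| ≤ M ^ (1/2 : ℝ) ∧ |ξ' t i| ≤ M ^ (1/2 : ℝ)) →
      -- the transport equation for the sound speed
      (∀ (x : Fin 3 → ℝ) (t : ℝ), t ∈ Set.Ico (-ε) Tstar →
        ((1+α)/2) * deriv (fun t' => σ x t') t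
          + (∑ i, (u x t i - ξ' t i) * pd i (fun x' => σ x' t) x)
          + α * σ x t * (∑ i, pd i (fun x' => u x' t i) x) = 0) →
      -- initial support condition
      (∀ x : Fin 3 → ℝ, σ x (-ε) ≠ 0 →
        |x 0| ≤ ε ^ (1/2 : ℝ) ∧
        Real.sqrt ((x 1)^2 + (x 2)^2) ≤ ε ^ (1/6 : ℝ)) →
      -- conclusion: the support stays inside X(s) for all later times
      ∀ t : ℝ, t ∈ Set.Ico (-ε) Tstar → ∀ x : Fin 3 → ℝ, σ x t ≠ 0 →
        |x 0| ≤ 2 * ε ^ (1/2 : ℝ) ∧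
        Real.sqrt ((x 1)^2 + (x 2)^2) ≤ 2 * ε ^ (1/6 : ℝ) := by
  intro M hM
  -- `ε0` is chosen so that `(16 M)² ε ≤ 1`.
  refine ⟨1 / (256 * M ^ 2), by positivity, ?_⟩
  intro ε hε hεM u σ ξ' Tstar hT hTε hσ hu hξ hbound htransport hinit t ht x hx
  rw [lt_div_iff₀ (by positivity)] at hεM
  have hε1 : ε ≤ 1 := by nlinarith
  have hTstar : Tstar ≤ ε := by nlinarith [le_abs_self Tstar]
  have hsqrtM : M ^ (1 / 2 : ℝ) ≤ M := by
    simpa using Real.rpow_le_rpow_of_exponent_le hM (by norm_num : (1 / 2 : ℝ) ≤ 1)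
  have hrel : ∀ s ∈ Ico (-ε) Tstar, ∀ y, ‖u y s - ξ' s‖ ≤ 2 * M := fun s hs y =>
    (pi_norm_le_iff_of_nonneg (by positivity)).2 fun i => by
      obtain ⟨hui, hξi⟩ := hbound y s hs i
      rw [Pi.sub_apply, Real.norm_eq_abs]
      linarith [abs_sub (u y s i) (ξ' s i)]
  obtain ⟨x₀, hx₀, hdist⟩ :=
    exists_ne_zero_initial_of_sound_speed hα.le hσ hu hξ hrel htransport ht hx
  have hdisp : ‖x - x₀‖ ≤ 8 * M * ε := hdist.trans (by nlinarith [ht.2])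
  have hsmall₁ : 8 * M * ε ≤ ε ^ (1 / 2 : ℝ) :=
    mul_le_rpow_of_sq_mul_le hε hε1 le_rfl (by positivity) (by nlinarith)
  have hsmall₂ : 16 * M * ε ≤ ε ^ (1 / 6 : ℝ) :=
    mul_le_rpow_of_sq_mul_le hε hε1 (by norm_num) (by positivity) (by nlinarith)
  obtain ⟨hx₀1, hx₀2⟩ := hinit x₀ hx₀
  obtain ⟨hx1, hx2⟩ := coord_bounds_of_norm_sub_le hdisp
  exact ⟨by linarith, by linarith⟩

theorem propagation_of_compact_support
    (α κ0 : ℝ) (hα : 0 < α) (hκ0 : 1 < κ0) :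
    ∀ M : ℝ, 1 ≤ M → ∃ ε0 : ℝ, 0 < ε0 ∧ ∀ ε : ℝ, 0 < ε → ε < ε0 →
    ∀ (u : (Fin 3 → ℝ) → ℝ → Fin 3 → ℝ) (σ : (Fin 3 → ℝ) → ℝ → ℝ)
      (ξ' : ℝ → Fin 3 → ℝ) (Tstar : ℝ),
      -- blowup time bound (modulation)
      |Tstar| ≤ 3 * M * ε^2 → -ε < Tstar →
      -- regularity
      ContDiff ℝ 1 (fun p : (Fin 3 → ℝ) × ℝ => σ p.1 p.2) →
      (∀ i : Fin 3, ContDiff ℝ 1 (fun p : (Fin 3 → ℝ) × ℝ => u p.1 p.2 i)) →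
      Continuous (fun t => ξ' t) →
      -- bootstrap/modulation bounds on the velocity and on ξ̇
      (∀ (x : Fin 3 → ℝ) (t : ℝ), t ∈ Set.Ico (-ε) Tstar → ∀ i : Fin 3,
        |u x t i| ≤ M ^ (1/2 : ℝ) ∧ |ξ' t i| ≤ M ^ (1/2 : ℝ)) →
      -- the transport equation for the sound speed
      (∀ (x : Fin 3 → ℝ) (t : ℝ), t ∈ Set.Ico (-ε) Tstar →
        ((1+α)/2) * deriv (fun t' => σ x t') t
          + (∑ i, (u x t i - ξ' t i) * pd i (fun x' => σ x' t) x)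
          + α * σ x t * (∑ i, pd i (fun x' => u x' t i) x) = 0) →
      -- initial support condition
      (∀ x : Fin 3 → ℝ, σ x (-ε) ≠ 0 →
        |x 0| ≤ ε ^ (1/2 : ℝ) ∧
        Real.sqrt ((x 1)^2 + (x 2)^2) ≤ ε ^ (1/6 : ℝ)) →
      -- conclusion: the support stays inside X(s) for all later times
      ∀ t : ℝ, t ∈ Set.Ico (-ε) Tstar → ∀ x : Fin 3 → ℝ, σ x t ≠ 0 →
        |x 0| ≤ 2 * ε ^ (1/2 : ℝ) ∧
        Real.sqrt ((x 1)^2 + (x 2)^2) ≤ 2 * ε ^ (1/6 : ℝ) :=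
  propagation_of_compact_support_general α hα
end

section
/- Uniform integral estimate: let 0 ≤ σ₁ < 1/2 and 2σ₁ < σ₂, and let ε ∈ (0,1). Then there exists a constant C depending only on σ₁ and σ₂ (independent of ε and of s*) such that for every s* ∈ ℝ: ∫_{−log ε}^{∞} e^{σ₁ s}·(1 + |e^{s/2} − e^{s*/2}|)^{−σ₂} ds ≤ C. -/
/-!
Cut the half-line at distance `2 log 2` from `s*`. Far from `s*` one has
`|e^{s/2} - e^{s*/2}| ≥ e^{s/2}/2`, so the integrand decays like `e^{(σ₁ - τ/2) s}` for any
`τ ∈ (2σ₁, σ₂]`. Near `s*` the mean value bound `|e^{s/2} - e^{s*/2}| ≳ e^{s*/2} |s - s*|`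
makes the integrand at most `8^τ |s - s*|^{-τ}`, which is integrable once `τ < 1`; here
`σ₁ < 1/2` leaves room for such a `τ`. Both bounds are independent of `ε` and `s*`.
-/

open MeasureTheory Real Set

lemma exp_mul_sub_le_exp_sub_exp (u v : ℝ) : exp u * (v - u) ≤ exp v - exp u := by
  have h := mul_le_mul_of_nonneg_left (add_one_le_exp (v - u)) (exp_pos u).le
  rw [← exp_add, add_sub_cancel] at h
  linarith

lemma exp_add_log_two (u : ℝ) : exp (u + log 2) = 2 * exp u := by
  rw [exp_add, exp_log two_pos, mul_comm]

lemma exp_div_two_le_abs_exp_sub_exp {u v : ℝ} (h : log 2 ≤ |u - v|) :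
    exp u / 2 ≤ |exp u - exp v| := by
  rcases le_abs'.1 h with h | h
  · have : 2 * exp u ≤ exp v := exp_add_log_two u ▸ exp_le_exp.2 (by linarith)
    rw [abs_sub_comm, abs_of_nonneg (by linarith [exp_pos u])]
    linarith [exp_pos u]
  · have : 2 * exp v ≤ exp u := exp_add_log_two v ▸ exp_le_exp.2 (by linarith)
    rw [abs_of_nonneg (by linarith [exp_pos v])]
    linarith [exp_pos v]

lemma exp_mul_abs_sub_le_abs_exp_sub_exp {u v : ℝ} (h : |u - v| ≤ log 2) :
    exp v * |u - v| / 2 ≤ |exp u - exp v| := by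
  have hmvt := exp_mul_sub_le_exp_sub_exp u v
  have hmvt' := exp_mul_sub_le_exp_sub_exp v u
  rcases le_total u v with huv | hvu
  · rw [abs_of_nonpos (sub_nonpos.2 huv)] at h ⊢
    have : exp v ≤ 2 * exp u := exp_add_log_two u ▸ exp_le_exp.2 (by linarith)
    rw [abs_of_nonpos (by linarith [exp_le_exp.2 huv])]
    nlinarith
  · rw [abs_of_nonneg (sub_nonneg.2 hvu), abs_of_nonneg (by linarith [exp_le_exp.2 hvu])]
    nlinarith [exp_pos v]

lemma one_add_rpow_neg_le_rpow_neg {X Y σ τ : ℝ} (hX : 0 ≤ X) (hY : 0 < Y) (hYX : Y ≤ 1 + X)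
    (hτ : 0 ≤ τ) (hτσ : τ ≤ σ) : (1 + X) ^ (-σ) ≤ Y ^ (-τ) :=
  (rpow_le_rpow_of_exponent_le (by linarith) (by linarith)).trans
    (rpow_le_rpow_of_nonpos hY hYX (by linarith))

lemma integrableOn_and_setIntegral_le_of_norm_le {α : Type*} [MeasurableSpace α]
    {μ : Measure α} {f g : α → ℝ} {s t : Set α} (hst : s ⊆ t)
    (hf : AEStronglyMeasurable f (μ.restrict s)) (hfg : ∀ᵐ x ∂μ.restrict s, ‖f x‖ ≤ g x)
    (hg : IntegrableOn g t μ) (hg0 : 0 ≤ᵐ[μ.restrict t] g) :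
    IntegrableOn f s μ ∧ ∫ x in s, f x ∂μ ≤ ∫ x in t, g x ∂μ := by
  have hfi : IntegrableOn f s μ := (hg.mono_set hst).mono' hf hfg
  refine ⟨hfi, (integral_mono_ae hfi (hg.mono_set hst) ?_).trans
    (setIntegral_mono_set hg hg0 hst.eventuallyLE)⟩
  filter_upwards [hfg] with x hx
  exact (le_abs_self _).trans hx

lemma integrableOn_Ioi_and_setIntegral_exp_add_comp_sub_le {a A c : ℝ} {K : ℝ → ℝ} (ha : a < 0)
    (hK : Integrable K) (hK0 : ∀ u, 0 ≤ K u) :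
    IntegrableOn (fun s => A * exp (a * s) + K (s - c)) (Ioi 0) ∧
      ∫ s in Ioi 0, (A * exp (a * s) + K (s - c)) ≤ A * (-1 / a) + ∫ u, K u := by
  have hexp := (integrableOn_exp_mul_Ioi ha 0).const_mul A
  have hK' := hK.comp_sub_right c
  refine ⟨hexp.add hK'.integrableOn, ?_⟩
  rw [integral_add hexp hK'.integrableOn, integral_const_mul, integral_exp_mul_Ioi ha,
    mul_zero, exp_zero, ← integral_sub_right_eq_self K c]
  exact add_le_add le_rfl (setIntegral_le_integral hK' (ae_of_all _ fun s => hK0 _))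

noncomputable def weight (σ₁ σ₂ c s : ℝ) : ℝ :=
  exp (σ₁ * s) * (1 + |exp (s / 2) - exp (c / 2)|) ^ (-σ₂)

lemma weight_nonneg (σ₁ σ₂ c s : ℝ) : 0 ≤ weight σ₁ σ₂ c s := by
  unfold weight; positivity

lemma continuous_weight (σ₁ σ₂ c : ℝ) : Continuous (weight σ₁ σ₂ c) := by
  unfold weight
  refine (by fun_prop : Continuous fun s => exp (σ₁ * s)).mul
    (Continuous.rpow_const (by fun_prop) fun s => Or.inl ?_)
  positivity

lemma abs_half_sub_half (s c : ℝ) : |s / 2 - c / 2| = |s - c| / 2 := by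
  rw [← sub_div, abs_div, abs_two]

section

variable {σ₁ σ₂ τ c s : ℝ}

lemma weight_le_of_two_log_two_le (hτ : 0 ≤ τ) (hτσ : τ ≤ σ₂) (h : 2 * log 2 ≤ |s - c|) :
    weight σ₁ σ₂ c s ≤ 2 ^ τ * exp ((σ₁ - τ / 2) * s) := by
  have hsep : exp (s / 2) / 2 ≤ |exp (s / 2) - exp (c / 2)| :=
    exp_div_two_le_abs_exp_sub_exp (by rw [abs_half_sub_half]; linarith)
  calc weight σ₁ σ₂ c s ≤ exp (σ₁ * s) * (exp (s / 2) / 2) ^ (-τ) :=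
        mul_le_mul_of_nonneg_left (one_add_rpow_neg_le_rpow_neg (abs_nonneg _) (by positivity)
          (by linarith) hτ hτσ) (exp_pos _).le
    _ = 2 ^ τ * exp ((σ₁ - τ / 2) * s) := by
        rw [div_rpow (exp_pos _).le two_pos.le, ← exp_mul, rpow_neg two_pos.le, div_inv_eq_mul,
          ← mul_assoc, ← exp_add, mul_comm]
        ring_nf

lemma weight_le_of_abs_sub_le_two_log_two (hs : 0 ≤ s) (hστ : 2 * σ₁ ≤ τ) (hτ : 0 ≤ τ)
    (hτσ : τ ≤ σ₂) (hne : s ≠ c) (h : |s - c| ≤ 2 * log 2) :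
    weight σ₁ σ₂ c s ≤ 8 ^ τ * |s - c| ^ (-τ) := by
  set b := exp (c / 2)
  have hb : 0 < b := exp_pos _
  have hd : 0 < |s - c| := abs_pos.2 (sub_ne_zero.2 hne)
  have hsep : b * (|s - c| / 4) ≤ |exp (s / 2) - b| := by
    have := exp_mul_abs_sub_le_abs_exp_sub_exp (u := s / 2) (v := c / 2)
      (by rw [abs_half_sub_half]; linarith)
    rw [abs_half_sub_half] at this
    linarith
  have hgrowth : exp (τ / 2 * s) ≤ (2 * b) ^ τ := by
    rw [show τ / 2 * s = s / 2 * τ by ring, exp_mul]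
    refine rpow_le_rpow (exp_pos _).le ?_ hτ
    exact exp_add_log_two (c / 2) ▸ exp_le_exp.2 (by linarith [(abs_le.1 h).2])
  calc weight σ₁ σ₂ c s ≤ exp (τ / 2 * s) * (b * (|s - c| / 4)) ^ (-τ) :=
        mul_le_mul (exp_le_exp.2 (by nlinarith))
          (one_add_rpow_neg_le_rpow_neg (abs_nonneg _) (by positivity) (by linarith) hτ hτσ)
          (by positivity) (exp_pos _).le
    _ ≤ (2 * b) ^ τ * (b * (|s - c| / 4)) ^ (-τ) :=
        mul_le_mul_of_nonneg_right hgrowth (by positivity)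
    _ = 8 ^ τ * |s - c| ^ (-τ) := by
        rw [rpow_neg (by positivity), rpow_neg hd.le, ← div_eq_mul_inv, ← div_eq_mul_inv,
          ← div_rpow (by positivity) (by positivity), ← div_rpow (by positivity) hd.le]
        congr 1
        field_simp
        norm_num

noncomputable def nearKernel (τ : ℝ) : ℝ → ℝ :=
  (Icc (-(2 * log 2)) (2 * log 2)).indicator fun u => 8 ^ τ * |u| ^ (-τ)

lemma nearKernel_nonneg (τ u : ℝ) : 0 ≤ nearKernel τ u :=
  indicator_nonneg (fun _ _ => by positivity) u

lemma locallyIntegrable_abs_rpow_neg (hτ : τ < 1) :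
    LocallyIntegrable (fun u : ℝ => |u| ^ (-τ)) :=
  locallyIntegrable_of_norm_le_rpow (C := 1) (by simp) (by simpa using hτ)
    (ae_of_all _ fun u => by rw [one_mul, norm_of_nonneg (by positivity), norm_eq_abs])
    (continuous_abs.measurable.pow_const _).aestronglyMeasurable

lemma integrable_nearKernel (hτ : τ < 1) : Integrable (nearKernel τ) :=
  IntegrableOn.integrable_indicator
    (((locallyIntegrable_abs_rpow_neg hτ).integrableOn_isCompact isCompact_Icc).const_mul _)
    measurableSet_Icc

lemma weight_le_exp_add_nearKernel (hs : 0 ≤ s) (hστ : 2 * σ₁ ≤ τ) (hτ : 0 ≤ τ) (hτσ : τ ≤ σ₂) (hne : s ≠ c) :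
    weight σ₁ σ₂ c s ≤ 2 ^ τ * exp ((σ₁ - τ / 2) * s) + nearKernel τ (s - c) := by
  by_cases h : |s - c| ≤ 2 * log 2
  · rw [nearKernel, indicator_of_mem (mem_Icc.2 (abs_le.1 h))]
    have := weight_le_of_abs_sub_le_two_log_two hs hστ hτ hτσ hne h
    linarith [(by positivity : 0 ≤ 2 ^ τ * exp ((σ₁ - τ / 2) * s))]
  · linarith [weight_le_of_two_log_two_le (σ₁ := σ₁) hτ hτσ (not_le.1 h).le,
      nearKernel_nonneg τ (s - c)]

end

theorem uniform_integral_estimate (σ1 σ2 : ℝ)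
    (h1 : 0 ≤ σ1) (h2 : σ1 < 1/2) (h3 : 2 * σ1 < σ2) :
    ∃ C : ℝ, ∀ ε : ℝ, ε ∈ Set.Ioo (0:ℝ) 1 → ∀ sstar : ℝ,
      IntegrableOn
        (fun s => Real.exp (σ1 * s) *
          (1 + |Real.exp (s/2) - Real.exp (sstar/2)|) ^ (-σ2))
        (Set.Ioi (-Real.log ε)) volume ∧
      (∫ s in Set.Ioi (-Real.log ε),
          Real.exp (σ1 * s) *
            (1 + |Real.exp (s/2) - Real.exp (sstar/2)|) ^ (-σ2)) ≤ C := by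
  obtain ⟨τ, hστ, hτ1, hτσ⟩ : ∃ τ, 2 * σ1 < τ ∧ τ < 1 ∧ τ ≤ σ2 :=
    ⟨(2 * σ1 + min 1 σ2) / 2, by linarith [lt_min (by linarith : 2 * σ1 < 1) h3],
      by linarith [min_le_left 1 σ2], by linarith [min_le_right 1 σ2]⟩
  have hτ : 0 ≤ τ := by linarith
  have ha : σ1 - τ / 2 < 0 := by linarith
  refine ⟨2 ^ τ * (-1 / (σ1 - τ / 2)) + ∫ u, nearKernel τ u, fun ε hε sstar => ?_⟩
  have hs₀ : 0 ≤ -log ε := neg_nonneg.2 (log_nonpos hε.1.le hε.2.le)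
  obtain ⟨hg, hgC⟩ := integrableOn_Ioi_and_setIntegral_exp_add_comp_sub_le (A := 2 ^ τ) (c := sstar)
    ha (integrable_nearKernel hτ1) (nearKernel_nonneg τ)
  -- `nearKernel τ 0 = 0` (as `0 ^ (-τ) = 0`), so the bound fails at `s = sstar`.
  have hdom : ∀ᵐ s ∂volume.restrict (Ioi (-log ε)),
      ‖weight σ1 σ2 sstar s‖ ≤ 2 ^ τ * exp ((σ1 - τ / 2) * s) + nearKernel τ (s - sstar) := by
    filter_upwards [ae_restrict_mem measurableSet_Ioi,
      ae_restrict_of_ae (compl_mem_ae_iff.2 (measure_singleton sstar))] with s hs hne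
    rw [norm_of_nonneg (weight_nonneg ..)]
    exact weight_le_exp_add_nearKernel (hs₀.trans hs.le) hστ.le hτ hτσ hne
  obtain ⟨hf, hfg⟩ := integrableOn_and_setIntegral_le_of_norm_le (Ioi_subset_Ioi hs₀)
    (continuous_weight σ1 σ2 sstar).aestronglyMeasurable hdom hg
    (ae_of_all _ fun s => add_nonneg (by positivity) (nearKernel_nonneg τ _))
  exact ⟨hf, hfg.trans hgC⟩
end
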